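/- arXiv:2404.11524 — 2 statements merged into one kernel-verified Lean document; each statement's English description precedes it below -/
import Mathlib

section
/- Every countable existentially closed group is ω-homogeneous: any isomorphism between finitely generated subgroups extends to an automorphism of the whole group. -/
namespace Paper

inductive QF (α : Type) : Type
  | eq (w : FreeGroup α) : QF α
  | not (φ : QF α) : QF α
  | and (φ ψ : QF α) : QF α
  | or (φ ψ : QF α) : QF α

def QF.Sat {α : Type} {G : Type*} [Group G] (x : α → G) : QF α → Prop
  | .eq w => FreeGroup.lift x w = 1
  | .not φ => ¬ QF.Sat x φ
  | .and φ ψ => QF.Sat x φ ∧ QF.Sat x ψ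
  | .or φ ψ => QF.Sat x φ ∨ QF.Sat x ψ

def IsEC (M : Type) [Group M] : Prop :=
  ∀ (n m : ℕ) (φ : QF (Fin n ⊕ Fin m)) (p : Fin m → M),
    (∃ (N : Type) (_ : Group N) (ι : M →* N) (x : Fin n → N),
        Function.Injective ι ∧ QF.Sat (Sum.elim x (⇑ι ∘ p)) φ) →
    ∃ x : Fin n → M, QF.Sat (Sum.elim x p) φ

end Paper

namespace Paper

/-- Conjunction of a list of equations. -/
def QF.allEq {α : Type} : List (FreeGroup α) → QF α
  | [] => .eq 1
  | w :: l => .and (.eq w) (QF.allEq l)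

theorem QF.sat_allEq {α : Type} {G : Type*} [Group G] (x : α → G) :
    ∀ l : List (FreeGroup α), QF.Sat x (QF.allEq l) ↔ ∀ w ∈ l, FreeGroup.lift x w = 1
  | [] => by simp [QF.allEq, QF.Sat]
  | w :: l => by
    simp only [QF.allEq, QF.Sat, QF.sat_allEq x l, List.mem_cons]
    constructor
    · rintro ⟨h1, h2⟩ v (rfl | hv)
      · exact h1
      · exact h2 v hv
    · intro h
      exact ⟨h w (Or.inl rfl), fun v hv => h v (Or.inr hv)⟩

/-- Every countable existentially closed group is ω-homogeneous: any isomorphism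
between finitely generated subgroups extends to an automorphism. -/
theorem isEC_omega_homogeneous (M : Type) [Group M] [Countable M] (hM : IsEC M)
    (A B : Subgroup M) (hA : A.FG) (hB : B.FG) (e : A ≃* B) :
    ∃ f : M ≃* M, ∀ a : A, f (a : M) = (e a : M) := by
  classical
  obtain ⟨S, hS⟩ := hA
  set l : List M := S.toList with hl
  set k : ℕ := l.length with hk
  -- generators of A
  have hmemA : ∀ i : Fin k, l.get i ∈ A := by
    intro i
    exact hS ▸ Subgroup.subset_closure (Finset.mem_toList.mp (List.get_mem l i))
  set a : Fin k → A := fun i => ⟨l.get i, hmemA i⟩ with ha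
  -- parameters: first k are generators of A, next k their images under e
  set p : Fin (k + k) → M :=
    Fin.addCases (fun i => (a i : M)) (fun i => (e (a i) : M)) with hp
  -- the words xᵢ : x * aᵢ * x⁻¹ * (e aᵢ)⁻¹
  set w : Fin k → FreeGroup (Fin 1 ⊕ Fin (k + k)) := fun i =>
    FreeGroup.of (Sum.inl 0) * FreeGroup.of (Sum.inr (Fin.castAdd k i)) *
      (FreeGroup.of (Sum.inl 0))⁻¹ * (FreeGroup.of (Sum.inr (Fin.natAdd k i)))⁻¹ with hw
  set φ : QF (Fin 1 ⊕ Fin (k + k)) := QF.allEq ((List.finRange k).map w) with hφ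
  -- solvable in the HNN extension
  have hext : ∃ (N : Type) (_ : Group N) (ι : M →* N) (x : Fin 1 → N),
      Function.Injective ι ∧ QF.Sat (Sum.elim x (⇑ι ∘ p)) φ := by
    refine ⟨HNNExtension M A B e, inferInstance, HNNExtension.of,
      fun _ => HNNExtension.t, HNNExtension.of_injective (φ := e), ?_⟩
    rw [hφ, QF.sat_allEq]
    intro v hv
    simp only [List.mem_map, List.mem_finRange] at hv
    obtain ⟨i, -, rfl⟩ := hv
    rw [hw]
    simp only [map_mul, map_inv, FreeGroup.lift_apply_of, Sum.elim_inl, Sum.elim_inr,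
      Function.comp_apply, hp, Fin.addCases_left, Fin.addCases_right]
    have := HNNExtension.equiv_eq_conj (φ := e) (a i)
    rw [mul_inv_eq_one, ← this]
  obtain ⟨x, hx⟩ := hM 1 (k + k) φ p hext
  set g : M := x 0 with hg
  have hconj : ∀ i : Fin k, g * (a i : M) * g⁻¹ = (e (a i) : M) := by
    intro i
    rw [hφ, QF.sat_allEq] at hx
    have := hx (w i) (by simp)
    rw [hw] at this
    simp only [map_mul, map_inv, FreeGroup.lift_apply_of, Sum.elim_inl, Sum.elim_inr,
      hp, Fin.addCases_left, Fin.addCases_right] at this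
    rw [mul_inv_eq_one] at this
    exact this
  -- conjugation by g agrees with e on all of A
  have key : ∀ m : M, ∀ hm : m ∈ A, g * m * g⁻¹ = (e ⟨m, hm⟩ : M) := by
    intro m hm
    have hm' : m ∈ Subgroup.closure (S : Set M) := hS.symm ▸ hm
    induction hm' using Subgroup.closure_induction with
    | mem y hy =>
      have : y ∈ l := by simpa [hl] using hy
      obtain ⟨i, hi⟩ := List.mem_iff_get.mp this
      subst hi
      exact hconj i
    | one =>
      rw [show ((⟨1, hm⟩ : A)) = 1 from rfl, map_one]
      simp
    | mul y z hy hz ihy ihz =>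
      have hyA : y ∈ A := hS ▸ hy
      have hzA : z ∈ A := hS ▸ hz
      have : e (⟨y, hyA⟩ * ⟨z, hzA⟩) = e ⟨y, hyA⟩ * e ⟨z, hzA⟩ := map_mul e _ _
      calc g * (y * z) * g⁻¹ = (g * y * g⁻¹) * (g * z * g⁻¹) := by group
        _ = (e ⟨y, hyA⟩ : M) * (e ⟨z, hzA⟩ : M) := by rw [ihy hyA, ihz hzA]
        _ = _ := by rw [← Subgroup.coe_mul, ← this]; rfl
    | inv y hy ihy =>
      have hyA : y ∈ A := hS ▸ hy
      have : e (⟨y, hyA⟩⁻¹) = (e ⟨y, hyA⟩)⁻¹ := map_inv e _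
      calc g * y⁻¹ * g⁻¹ = (g * y * g⁻¹)⁻¹ := by group
        _ = ((e ⟨y, hyA⟩ : M))⁻¹ := by rw [ihy hyA]
        _ = _ := by rw [← Subgroup.coe_inv, ← this]; rfl
  refine ⟨MulAut.conj g, ?_⟩
  rintro ⟨m, hm⟩
  simpa [MulAut.conj] using key m hm
end Paper
end

section
/- If F is a finitely presented extension of a finitely generated group G, then the word problem of F is enumeration equivalent to the word problem of G. -/
namespace Paper

open scoped Classical

/-- The characteristic function of a set of naturals, as a partial function. -/
noncomputable def chi (X : Set ℕ) : ℕ →. ℕ :=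
  fun n => Part.some (if n ∈ X then 1 else 0)

/-- Kleene-style definition of the partial functions recursive in an oracle `g`. -/
inductive RecursiveIn (g : ℕ →. ℕ) : (ℕ →. ℕ) → Prop
  | zero : RecursiveIn g (pure 0)
  | succ : RecursiveIn g (↑Nat.succ)
  | left : RecursiveIn g (↑fun n : ℕ => (Nat.unpair n).1)
  | right : RecursiveIn g (↑fun n : ℕ => (Nat.unpair n).2)
  | oracle : RecursiveIn g g
  | pair {f h : ℕ →. ℕ} : RecursiveIn g f → RecursiveIn g h →
      RecursiveIn g fun n => Nat.pair <$> f n <*> h n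
  | comp {f h : ℕ →. ℕ} : RecursiveIn g f → RecursiveIn g h →
      RecursiveIn g fun n => h n >>= f
  | prec {f h : ℕ →. ℕ} : RecursiveIn g f → RecursiveIn g h →
      RecursiveIn g (Nat.unpaired fun a n =>
        n.rec (f a) fun y IH => do let i ← IH; h (Nat.pair a (Nat.pair y i)))
  | rfind {f : ℕ →. ℕ} : RecursiveIn g f →
      RecursiveIn g fun a => Nat.rfind fun n => (fun m => m = 0) <$> f (Nat.pair a n)

/-- `Y` is Turing reducible to `X`. -/
noncomputable def TuringReducible (Y X : Set ℕ) : Prop :=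
  RecursiveIn (chi X) (chi Y)

/-- The effective join (recursive join) of two sets of naturals. -/
def join (A B : Set ℕ) : Set ℕ :=
  {n | (n % 2 = 0 ∧ n / 2 ∈ A) ∨ (n % 2 = 1 ∧ n / 2 ∈ B)}

/-- The `i`-th canonical finite set: `n ∈ D i` iff the `n`-th bit of `i` is `1`. -/
def Dfin (i : ℕ) : Set ℕ := {n | Nat.testBit i n}

/-- A set of naturals is computably enumerable. -/
def CE (W : Set ℕ) : Prop := REPred (· ∈ W)

/-- Enumeration reducibility: every enumeration of `X` yields an enumeration of `Y`,
via a c.e. set `W` of axioms `⟨n, i⟩` meaning "`n ∈ Y` provided `D i ⊆ X`". -/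
def EnumReducible (Y X : Set ℕ) : Prop :=
  ∃ W : Set ℕ, CE W ∧ ∀ n, n ∈ Y ↔ ∃ i, Nat.pair n i ∈ W ∧ Dfin i ⊆ X

/-- `Y` is computably enumerable in (the oracle) `X`. -/
noncomputable def CEIn (Y X : Set ℕ) : Prop :=
  ∃ f : ℕ →. ℕ, RecursiveIn (chi X) f ∧ ∀ n, n ∈ Y ↔ (f n).Dom

end Paper

namespace Paper

/-- The image of a set under the canonical encoding of its elements as naturals. -/
def encSet {α : Type*} [Encodable α] (A : Set α) : Set ℕ :=
  {n | ∃ a ∈ A, Encodable.encode a = n}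

end Paper

namespace Paper

/-- The word problem of a group `G` with respect to a generating family `g`:
the set of words (on the generators and their inverses) that equal `1` in `G`. -/
def wordProblem {k : ℕ} {G : Type*} [Group G] (g : Fin k → G) :
    Set (List (Fin k × Bool)) :=
  {w | FreeGroup.lift g (FreeGroup.mk w) = 1}

end Paper

namespace Paper

/-- The relators of a finitely presented extension of `G = ⟨g | W(G)⟩`:
all words on the old generators that hold in `G`, plus finitely many
new relators `R` on the old and new generators. -/
def extRels {k l : ℕ} {G : Type*} [Group G] (g : Fin k → G)
    (R : Set (FreeGroup (Fin k ⊕ Fin l))) : Set (FreeGroup (Fin k ⊕ Fin l)) :=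
  (fun w => FreeGroup.map Sum.inl (FreeGroup.mk w)) '' wordProblem g ∪ R


end Paper

namespace Paper
namespace FP

open Encodable FreeGroup

/-! ### Primitive recursiveness of free-group reduction -/

theorem primrec_invRev {α : Type*} [Primcodable α] :
    Primrec (FreeGroup.invRev (α := α)) := by
  have h : Primrec fun w : List (α × Bool) =>
      (List.map (fun g : α × Bool => (g.1, !g.2)) w).reverse :=
    Primrec.list_reverse.comp <| Primrec.list_map .id <| Primrec.to₂ <|
      Primrec.pair (Primrec.fst.comp .snd) ((Primrec.dom_bool not).comp (Primrec.snd.comp .snd))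
  exact h.of_eq fun w => rfl

theorem primrec_reduce {α : Type*} [Primcodable α] [DecidableEq α] :
    Primrec (FreeGroup.reduce (α := α)) := by
  have hq : Primrec fun z : (List (α × Bool) × ((α × Bool) × List (α × Bool) × List (α × Bool)))
      × ((α × Bool) × List (α × Bool)) =>
      if z.1.2.1.1 = z.2.1.1 ∧ z.1.2.1.2 = !z.2.1.2 then z.2.2
      else z.1.2.1 :: z.2.1 :: z.2.2 := by
    apply Primrec.ite
    · apply PrimrecPred.and
      · exact Primrec.eq.comp (Primrec.fst.comp <| Primrec.fst.comp <| Primrec.snd.comp .fst)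
          (Primrec.fst.comp <| Primrec.fst.comp .snd)
      · exact Primrec.eq.comp (Primrec.snd.comp <| Primrec.fst.comp <| Primrec.snd.comp .fst)
          ((Primrec.dom_bool not).comp <| Primrec.snd.comp <| Primrec.fst.comp .snd)
    · exact Primrec.snd.comp .snd
    · exact Primrec.list_cons.comp (Primrec.fst.comp <| Primrec.snd.comp .fst)
        (Primrec.list_cons.comp (Primrec.fst.comp .snd) (Primrec.snd.comp .snd))
  have hinner : Primrec fun p : List (α × Bool) × ((α × Bool) × List (α × Bool) × List (α × Bool)) =>
      (List.casesOn p.2.2.2 [p.2.1] fun hd2 tl2 =>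
        if p.2.1.1 = hd2.1 ∧ p.2.1.2 = !hd2.2 then tl2 else p.2.1 :: hd2 :: tl2 : List (α × Bool)) := by
    exact Primrec.list_casesOn (Primrec.snd.comp <| Primrec.snd.comp .snd)
      (Primrec.list_cons.comp (Primrec.fst.comp .snd) (Primrec.const [])) hq.to₂
  have h := Primrec.list_rec (f := @id (List (α × Bool))) (g := fun _ => ([] : List (α × Bool)))
    (h := fun _ p =>
      (List.casesOn p.2.2 [p.1] fun hd2 tl2 =>
        if p.1.1 = hd2.1 ∧ p.1.2 = !hd2.2 then tl2 else p.1 :: hd2 :: tl2 : List (α × Bool)))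
    Primrec.id (Primrec.const []) hinner.to₂
  exact h.of_eq fun L => by
    induction L with
    | nil => rfl
    | cons a t ih =>
      rw [FreeGroup.reduce.cons, ← ih]; rfl

theorem primrec_testBit : Primrec₂ Nat.testBit := by
  have hpow : Primrec₂ (fun a b : ℕ => a ^ b) := Primrec₂.unpaired'.1 Nat.Primrec.pow
  have h : Primrec fun z : ℕ × ℕ => decide (z.1 / 2 ^ z.2 % 2 = 1) :=
    PrimrecPred.decide (Primrec.eq.comp
      (Primrec.nat_mod.comp (Primrec.nat_div.comp .fst (hpow.comp (Primrec.const 2) .snd))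
        (Primrec.const 2)) (Primrec.const 1))
  exact h.to₂.of_eq fun x m => (Nat.testBit_eq_decide_div_mod_eq).symm

end FP
end Paper

namespace Paper
namespace FP

open Encodable FreeGroup

/-! ### Derivations -/

/-- Embed a word on the old generators into the extended alphabet. -/
def mapWd (k l : ℕ) (v : List (Fin k × Bool)) : List ((Fin k ⊕ Fin l) × Bool) :=
  v.map fun p => (Sum.inl p.1, p.2)

/-- A derivation item: a conjugator word, a relator source (either a word on the old
generators, or an index into the list of extra relators), and a sign. -/
abbrev Item (k l : ℕ) :=
  List ((Fin k ⊕ Fin l) × Bool) × (List (Fin k × Bool) ⊕ ℕ) × Bool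

/-- The word of a relator source. -/
def srcWord (k l : ℕ) (L : List (List ((Fin k ⊕ Fin l) × Bool)))
    (s : List (Fin k × Bool) ⊕ ℕ) : List ((Fin k ⊕ Fin l) × Bool) :=
  match s with
  | .inl v => mapWd k l v
  | .inr j => L.getD j []

/-- The word of a derivation item: a conjugated (inverted) relator. -/
def fWord (k l : ℕ) (L : List (List ((Fin k ⊕ Fin l) × Bool))) (t : Item k l) :
    List ((Fin k ⊕ Fin l) × Bool) :=
  t.1 ++ (bif t.2.2 then srcWord k l L t.2.1 else FreeGroup.invRev (srcWord k l L t.2.1))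
    ++ FreeGroup.invRev t.1

/-- The word of a derivation. -/
def dWord (k l : ℕ) (L : List (List ((Fin k ⊕ Fin l) × Bool))) (d : List (Item k l)) :
    List ((Fin k ⊕ Fin l) × Bool) :=
  (d.map (fWord k l L)).flatten

theorem mk_fWord (k l : ℕ) (L : List (List ((Fin k ⊕ Fin l) × Bool))) (t : Item k l) :
    FreeGroup.mk (fWord k l L t) =
      FreeGroup.mk t.1 *
        (bif t.2.2 then FreeGroup.mk (srcWord k l L t.2.1)
          else (FreeGroup.mk (srcWord k l L t.2.1))⁻¹) * (FreeGroup.mk t.1)⁻¹ := by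
  obtain ⟨c, s, b⟩ := t
  cases b <;> simp [fWord, ← FreeGroup.mul_mk, FreeGroup.inv_mk, mul_assoc]

theorem mk_dWord (k l : ℕ) (L : List (List ((Fin k ⊕ Fin l) × Bool))) (d : List (Item k l)) :
    FreeGroup.mk (dWord k l L d) = (d.map fun t => FreeGroup.mk (fWord k l L t)).prod := by
  induction d with
  | nil => simp [dWord, ← FreeGroup.one_eq_mk]
  | cons t d ih =>
    rw [dWord, List.map_cons, List.flatten_cons, ← FreeGroup.mul_mk, List.map_cons,
      List.prod_cons, ← ih]
    rfl

/-- Soundness: the word of a derivation whose old-generator relators all lie in the word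
problem of `G` lies in the normal closure of the extended relators. -/
theorem mk_dWord_mem {k l : ℕ} {G : Type*} [Group G] (g : Fin k → G)
    (R : Set (FreeGroup (Fin k ⊕ Fin l))) (L : List (List ((Fin k ⊕ Fin l) × Bool)))
    (hL : ∀ j : ℕ, FreeGroup.mk (L.getD j []) ∈ R ∨ L.getD j [] = [])
    (d : List (Item k l)) (hd : ∀ t ∈ d, ∀ v, t.2.1 = Sum.inl v → v ∈ wordProblem g) :
    FreeGroup.mk (dWord k l L d) ∈ Subgroup.normalClosure (extRels g R) := by
  rw [mk_dWord]
  apply Subgroup.list_prod_mem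
  intro x hx
  obtain ⟨t, ht, rfl⟩ := List.mem_map.1 hx
  have hsrc : FreeGroup.mk (srcWord k l L t.2.1) ∈ Subgroup.normalClosure (extRels g R) := by
    rcases hs : t.2.1 with v | j
    · have hv : v ∈ wordProblem g := hd t ht v hs
      apply Subgroup.subset_normalClosure
      exact Or.inl ⟨v, hv, (FreeGroup.map.mk).symm⟩
    · rcases hL j with h | h
      · exact Subgroup.subset_normalClosure (Or.inr h)
      · rw [srcWord, h, ← FreeGroup.one_eq_mk]
        exact one_mem _
  have hsigned : (bif t.2.2 then FreeGroup.mk (srcWord k l L t.2.1)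
      else (FreeGroup.mk (srcWord k l L t.2.1))⁻¹) ∈ Subgroup.normalClosure (extRels g R) := by
    cases t.2.2
    · exact inv_mem hsrc
    · exact hsrc
  rw [mk_fWord]
  exact (Subgroup.normalClosure_normal).conj_mem _ hsigned _

/-- Completeness: every element of the normal closure of the extended relators is the
word of some derivation. -/
theorem exists_deriv {k l : ℕ} {G : Type*} [Group G] (g : Fin k → G)
    (R : Set (FreeGroup (Fin k ⊕ Fin l))) (L : List (List ((Fin k ⊕ Fin l) × Bool)))
    (hL : ∀ r ∈ R, ∃ j : ℕ, FreeGroup.mk (L.getD j []) = r)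
    {x : FreeGroup (Fin k ⊕ Fin l)} (hx : x ∈ Subgroup.normalClosure (extRels g R)) :
    ∃ d : List (Item k l), (∀ t ∈ d, ∀ v, t.2.1 = Sum.inl v → v ∈ wordProblem g) ∧
      FreeGroup.mk (dWord k l L d) = x := by
  have hsrc : ∀ e ∈ extRels g R, ∃ s : List (Fin k × Bool) ⊕ ℕ,
      (∀ v, s = Sum.inl v → v ∈ wordProblem g) ∧ FreeGroup.mk (srcWord k l L s) = e := by
    rintro e (⟨v, hv, rfl⟩ | he)
    · exact ⟨Sum.inl v, fun v' hv' => by cases Sum.inl.inj hv'; exact hv,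
        (FreeGroup.map.mk).symm⟩
    · obtain ⟨j, hj⟩ := hL e he
      exact ⟨Sum.inr j, fun v' hv' => by simp at hv', hj⟩
  have hfac : ∀ y ∈ Group.conjugatesOfSet (extRels g R) ∪
      (Group.conjugatesOfSet (extRels g R))⁻¹,
      ∃ t : Item k l, (∀ v, t.2.1 = Sum.inl v → v ∈ wordProblem g) ∧
        FreeGroup.mk (fWord k l L t) = y := by
    rintro y (hy | hy)
    · obtain ⟨e, he, hc⟩ := Group.mem_conjugatesOfSet_iff.1 hy
      obtain ⟨c, rfl⟩ := isConj_iff.1 hc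
      obtain ⟨s, hs1, hs2⟩ := hsrc e he
      refine ⟨(c.toWord, s, true), hs1, ?_⟩
      rw [mk_fWord]
      simp [FreeGroup.mk_toWord, hs2]
    · rw [Set.mem_inv] at hy
      obtain ⟨e, he, hc⟩ := Group.mem_conjugatesOfSet_iff.1 hy
      obtain ⟨c, hcy⟩ := isConj_iff.1 hc
      obtain ⟨s, hs1, hs2⟩ := hsrc e he
      refine ⟨(c.toWord, s, false), hs1, ?_⟩
      rw [mk_fWord]
      simp only [FreeGroup.mk_toWord, hs2, cond_false]
      have : y = c * e⁻¹ * c⁻¹ := by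
        have := congrArg (·⁻¹) hcy
        simp only [inv_inv] at this
        rw [← this]
        group
      rw [this]
  have hx' : x ∈ Submonoid.closure (Group.conjugatesOfSet (extRels g R) ∪
      (Group.conjugatesOfSet (extRels g R))⁻¹) := by
    rw [← Subgroup.closure_toSubmonoid]
    exact hx
  obtain ⟨lst, hlst, hprod⟩ := Submonoid.exists_list_of_mem_closure hx'
  subst hprod
  clear hx hx'
  induction lst with
  | nil =>
    refine ⟨[], by simp, ?_⟩
    simp [dWord, ← FreeGroup.one_eq_mk]
  | cons y ys ih =>
    obtain ⟨t, ht, hmt⟩ := hfac y (hlst y (List.mem_cons_self))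
    obtain ⟨d, hd, hmd⟩ := ih fun z hz => hlst z (List.mem_cons_of_mem _ hz)
    refine ⟨t :: d, ?_, ?_⟩
    · rintro t' ht' v hv
      rcases List.mem_cons.1 ht' with rfl | ht'
      · exact ht v hv
      · exact hd t' ht' v hv
    · rw [dWord] at hmd ⊢
      rw [List.map_cons, List.flatten_cons, ← FreeGroup.mul_mk, List.prod_cons, hmt, hmd]

end FP
end Paper

namespace Paper
namespace FP

open Encodable FreeGroup

/-! ### The checkers and their computability -/

/-- Does each old-generator relator of the derivation have its code in the mask `i`? -/
def gOk (k l : ℕ) (i : ℕ) (t : Item k l) : Bool :=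
  match t.2.1 with
  | .inl v => Nat.testBit i (Encodable.encode v)
  | .inr _ => true

/-- The c.e. checker for the reduction of the word problem of the extension to that of `G`:
`x` codes a pair `(code of a word u, mask)` and `n` codes a candidate derivation. -/
def chk (k l : ℕ) (L : List (List ((Fin k ⊕ Fin l) × Bool))) (x n : ℕ) : Bool :=
  Option.casesOn (Encodable.decode (α := List (Item k l)) n) false fun d =>
    Option.casesOn
      (Encodable.decode (α := List ((Fin k ⊕ Fin l) × Bool)) (Nat.unpair x).1) false fun u =>
      decide (Encodable.encode u = (Nat.unpair x).1) && d.all (gOk k l (Nat.unpair x).2)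
        && decide (FreeGroup.reduce u = FreeGroup.reduce (dWord k l L d))

/-- The checker for the reduction of the word problem of `G` to that of the extension. -/
def chk2 (k l : ℕ) (x : ℕ) : Bool :=
  Option.casesOn (Encodable.decode (α := List (Fin k × Bool)) (Nat.unpair x).1) false fun v =>
    decide (Encodable.encode v = (Nat.unpair x).1) &&
      decide ((Nat.unpair x).2 = 2 ^ Encodable.encode (mapWd k l v))

theorem primrec_mapWd (k l : ℕ) : Primrec (mapWd k l) := by
  have h : Primrec fun v : List (Fin k × Bool) => v.map fun p => ((Sum.inl p.1 : Fin k ⊕ Fin l), p.2) :=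
    Primrec.list_map .id <| Primrec.to₂ <|
      Primrec.pair (Primrec.sumInl.comp (Primrec.fst.comp .snd)) (Primrec.snd.comp .snd)
  exact h

theorem primrec_srcWord (k l : ℕ) (L : List (List ((Fin k ⊕ Fin l) × Bool))) :
    Primrec (srcWord k l L) := by
  have h : Primrec fun s : List (Fin k × Bool) ⊕ ℕ =>
      (Sum.casesOn s (fun v => mapWd k l v) fun j => L.getD j [] :
        List ((Fin k ⊕ Fin l) × Bool)) :=
    Primrec.sumCasesOn .id ((primrec_mapWd k l).comp .snd).to₂
      (((Primrec.list_getD []).comp (Primrec.const L) .snd).to₂)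
  exact h.of_eq fun s => by cases s <;> rfl

theorem primrec_fWord (k l : ℕ) (L : List (List ((Fin k ⊕ Fin l) × Bool))) :
    Primrec (fWord k l L) := by
  have hw : Primrec fun t : Item k l => srcWord k l L t.2.1 :=
    (primrec_srcWord k l L).comp (Primrec.fst.comp .snd)
  exact Primrec.list_append.comp
    (Primrec.list_append.comp .fst
      (Primrec.cond (Primrec.snd.comp .snd) hw (primrec_invRev.comp hw)))
    (primrec_invRev.comp .fst)

theorem primrec_dWord (k l : ℕ) (L : List (List ((Fin k ⊕ Fin l) × Bool))) :
    Primrec (dWord k l L) :=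
  Primrec.list_flatten.comp <| Primrec.list_map .id ((primrec_fWord k l L).comp .snd).to₂

theorem primrec_gOk (k l : ℕ) : Primrec₂ (gOk k l) := by
  have h : Primrec fun z : ℕ × Item k l =>
      (Sum.casesOn z.2.2.1 (fun v => Nat.testBit z.1 (Encodable.encode v))
        fun _ => true : Bool) :=
    Primrec.sumCasesOn (Primrec.fst.comp (Primrec.snd.comp .snd))
      ((primrec_testBit.comp (Primrec.fst.comp .fst) (Primrec.encode.comp .snd)).to₂)
      (Primrec.const true).to₂
  exact h.to₂.of_eq fun i t => by rcases t with ⟨c, s, b⟩; cases s <;> rfl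

theorem primrec_all (k l : ℕ) : Primrec₂ fun (i : ℕ) (d : List (Item k l)) =>
    d.all (gOk k l i) := by
  have h : Primrec fun z : ℕ × List (Item k l) =>
      z.2.foldr (fun t b => gOk k l z.1 t && b) true :=
    Primrec.list_foldr .snd (Primrec.const true) <| Primrec.to₂ <|
      Primrec.and.comp ((primrec_gOk k l).comp (Primrec.fst.comp .fst) (Primrec.fst.comp .snd))
        (Primrec.snd.comp .snd)
  exact h.to₂.of_eq fun i d => by
    induction d with
    | nil => rfl
    | cons t d ih => simp only [List.all_cons, List.foldr_cons, ih]

theorem primrec_chk (k l : ℕ) (L : List (List ((Fin k ⊕ Fin l) × Bool))) :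
    Primrec₂ (chk k l L) := by
  have hx : Primrec fun z : (ℕ × ℕ) × List (Item k l) => (Nat.unpair z.1.1).1 :=
    Primrec.fst.comp (Primrec.unpair.comp (Primrec.fst.comp .fst))
  have hbody : Primrec fun w : ((ℕ × ℕ) × List (Item k l)) ×
      List ((Fin k ⊕ Fin l) × Bool) =>
      (decide (Encodable.encode w.2 = (Nat.unpair w.1.1.1).1)
        && w.1.2.all (gOk k l (Nat.unpair w.1.1.1).2)
        && decide (FreeGroup.reduce w.2 = FreeGroup.reduce (dWord k l L w.1.2))) := by
    have p1 : Primrec fun w : ((ℕ × ℕ) × List (Item k l)) ×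
        List ((Fin k ⊕ Fin l) × Bool) => decide (Encodable.encode w.2 = (Nat.unpair w.1.1.1).1) :=
      PrimrecPred.decide (Primrec.eq.comp (Primrec.encode.comp .snd)
        (Primrec.fst.comp (Primrec.unpair.comp (Primrec.fst.comp (Primrec.fst.comp .fst)))))
    have p2 : Primrec fun w : ((ℕ × ℕ) × List (Item k l)) ×
        List ((Fin k ⊕ Fin l) × Bool) => w.1.2.all (gOk k l (Nat.unpair w.1.1.1).2) :=
      (primrec_all k l).comp
        (Primrec.snd.comp (Primrec.unpair.comp (Primrec.fst.comp (Primrec.fst.comp .fst))))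
        (Primrec.snd.comp .fst)
    have p3 : Primrec fun w : ((ℕ × ℕ) × List (Item k l)) ×
        List ((Fin k ⊕ Fin l) × Bool) =>
        decide (FreeGroup.reduce w.2 = FreeGroup.reduce (dWord k l L w.1.2)) :=
      PrimrecPred.decide (Primrec.eq.comp (primrec_reduce.comp .snd)
        (primrec_reduce.comp ((primrec_dWord k l L).comp (Primrec.snd.comp .fst))))
    exact Primrec.and.comp (Primrec.and.comp p1 p2) p3
  have hmid : Primrec fun p : (ℕ × ℕ) × List (Item k l) =>
      (Option.casesOn
        (Encodable.decode (α := List ((Fin k ⊕ Fin l) × Bool)) (Nat.unpair p.1.1).1) false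
        fun u =>
        decide (Encodable.encode u = (Nat.unpair p.1.1).1) && p.2.all (gOk k l (Nat.unpair p.1.1).2)
          && decide (FreeGroup.reduce u = FreeGroup.reduce (dWord k l L p.2)) : Bool) :=
    Primrec.option_casesOn (Primrec.decode.comp hx) (Primrec.const false) hbody.to₂
  have h : Primrec fun z : ℕ × ℕ =>
      (Option.casesOn (Encodable.decode (α := List (Item k l)) z.2) false fun d =>
        Option.casesOn
          (Encodable.decode (α := List ((Fin k ⊕ Fin l) × Bool)) (Nat.unpair z.1).1) false
          fun u =>
          decide (Encodable.encode u = (Nat.unpair z.1).1) && d.all (gOk k l (Nat.unpair z.1).2)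
            && decide (FreeGroup.reduce u = FreeGroup.reduce (dWord k l L d)) : Bool) :=
    Primrec.option_casesOn (Primrec.decode.comp .snd) (Primrec.const false) hmid.to₂
  exact h.to₂

end FP
end Paper

namespace Paper
namespace FP

open Encodable FreeGroup

theorem primrec_chk2 (k l : ℕ) : Primrec (chk2 k l) := by
  have hpow : Primrec₂ (fun a b : ℕ => a ^ b) := Primrec₂.unpaired'.1 Nat.Primrec.pow
  have hbody : Primrec fun w : ℕ × List (Fin k × Bool) =>
      (decide (Encodable.encode w.2 = (Nat.unpair w.1).1) &&
        decide ((Nat.unpair w.1).2 = 2 ^ Encodable.encode (mapWd k l w.2))) :=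
    Primrec.and.comp
      (PrimrecPred.decide (Primrec.eq.comp (Primrec.encode.comp .snd)
        (Primrec.fst.comp (Primrec.unpair.comp .fst))))
      (PrimrecPred.decide (Primrec.eq.comp (Primrec.snd.comp (Primrec.unpair.comp .fst))
        (hpow.comp (Primrec.const 2) (Primrec.encode.comp ((primrec_mapWd k l).comp .snd)))))
  have h : Primrec fun x : ℕ =>
      (Option.casesOn (Encodable.decode (α := List (Fin k × Bool)) (Nat.unpair x).1) false
        fun v =>
        decide (Encodable.encode v = (Nat.unpair x).1) &&
          decide ((Nat.unpair x).2 = 2 ^ Encodable.encode (mapWd k l v)) : Bool) :=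
    Primrec.option_casesOn (Primrec.decode.comp (Primrec.fst.comp Primrec.unpair))
      (Primrec.const false) hbody.to₂
  exact h

/-! ### Masks -/

/-- A mask whose bits are the members of `cs`. -/
def mask (cs : List ℕ) : ℕ := cs.foldr (fun c a => 2 ^ c ||| a) 0

theorem testBit_mask {cs : List ℕ} {m : ℕ} : Nat.testBit (mask cs) m = true ↔ m ∈ cs := by
  induction cs with
  | nil => simp [mask, Nat.zero_testBit]
  | cons c cs ih =>
    simp only [mask, List.foldr_cons, Nat.testBit_lor, Nat.testBit_two_pow, List.mem_cons,
      Bool.or_eq_true, decide_eq_true_eq] at *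
    rw [ih]
    constructor
    · rintro (rfl | h) <;> simp [*]
    · rintro (rfl | h) <;> simp [*]

/-- The codes of the old-generator relators used in a derivation. -/
def gcodes {k l : ℕ} (d : List (Item k l)) : List ℕ :=
  d.filterMap fun t =>
    match t.2.1 with
    | .inl v => some (Encodable.encode v)
    | .inr _ => none

/-! ### A criterion for recursive enumerability -/

theorem rePred_exists_bool {f : ℕ → ℕ → Bool} (hf : Computable₂ f) :
    REPred fun x : ℕ => ∃ n, f x n = true := by
  have h1 : Partrec fun x => Nat.rfind fun n => (f x n : Part Bool) :=
    Partrec.rfind hf.partrec₂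
  refine h1.dom_re.of_eq fun x => ?_
  refine (Nat.rfind_dom (p := fun n => Part.some (f x n))).trans ?_
  constructor
  · rintro ⟨n, hn, -⟩
    exact ⟨n, by simpa using hn⟩
  · rintro ⟨n, hn⟩
    exact ⟨n, by simpa using hn, fun {_} _ => by simp⟩

end FP
end Paper


namespace Paper

open FP

/-- If `F` is a finitely presented extension of the finitely generated group `G`
(so `g` generates a copy of `G` inside `F`), then the word problem of `F` is
enumeration equivalent to the word problem of `G`. -/
theorem fp_extension_wordProblem_enumEquiv (k l : ℕ) (G : Type) [Group G]
    (g : Fin k → G) (hg : Subgroup.closure (Set.range g) = ⊤)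
    (R : Set (FreeGroup (Fin k ⊕ Fin l))) (hR : R.Finite)
    (hcopy : ∀ v : FreeGroup (Fin k),
      FreeGroup.lift g v = 1 ↔ PresentedGroup.mk (extRels g R) (FreeGroup.map Sum.inl v) = 1) :
    EnumReducible
        (encSet {w : List ((Fin k ⊕ Fin l) × Bool) |
          FreeGroup.mk w ∈ Subgroup.normalClosure (extRels g R)})
        (encSet (wordProblem g)) ∧
      EnumReducible (encSet (wordProblem g))
        (encSet {w : List ((Fin k ⊕ Fin l) × Bool) |
          FreeGroup.mk w ∈ Subgroup.normalClosure (extRels g R)}) := by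
  classical
  set Lst : List (List ((Fin k ⊕ Fin l) × Bool)) := hR.toFinset.toList.map FreeGroup.toWord
    with hLst
  have hL1 : ∀ j : ℕ, FreeGroup.mk (Lst.getD j []) ∈ R ∨ Lst.getD j [] = [] := by
    intro j
    by_cases hj : j < Lst.length
    · left
      rw [List.getD_eq_getElem _ _ hj]
      have hjlen : j < hR.toFinset.toList.length := by
        simpa [hLst] using hj
      have hmem : hR.toFinset.toList[j] ∈ hR.toFinset.toList := List.getElem_mem hjlen
      rw [Finset.mem_toList, Set.Finite.mem_toFinset] at hmem
      simpa [hLst, List.getElem_map, FreeGroup.mk_toWord] using hmem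
    · right
      exact List.getD_eq_default _ _ (le_of_not_gt hj)
  have hL2 : ∀ r ∈ R, ∃ j : ℕ, FreeGroup.mk (Lst.getD j []) = r := by
    intro r hr
    have hmem : r ∈ hR.toFinset.toList := by
      rwa [Finset.mem_toList, Set.Finite.mem_toFinset]
    obtain ⟨j, hj, hjr⟩ := List.mem_iff_getElem.1 hmem
    have hj' : j < Lst.length := by simpa [hLst] using hj
    refine ⟨j, ?_⟩
    rw [List.getD_eq_getElem _ _ hj']
    simp only [hLst, List.getElem_map]
    rw [hjr, FreeGroup.mk_toWord]
  constructor
  · -- the word problem of the extension is enumeration reducible to that of `G`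
    refine ⟨{x | ∃ m, FP.chk k l Lst x m = true}, ?_, ?_⟩
    · exact FP.rePred_exists_bool ((FP.primrec_chk k l Lst).to_comp)
    · intro n
      constructor
      · rintro ⟨u, hu, rfl⟩
        obtain ⟨d, hd, hmk⟩ := FP.exists_deriv g R Lst hL2 hu
        refine ⟨FP.mask (FP.gcodes d), ⟨Encodable.encode d, ?_⟩, ?_⟩
        · simp only [FP.chk, Nat.unpair_pair, Encodable.encodek]
          rw [Bool.and_eq_true, Bool.and_eq_true]
          refine ⟨⟨by simp, ?_⟩, ?_⟩
          · rw [List.all_eq_true]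
            intro t ht
            rcases hts : t.2.1 with v | j
            · have hcv : Encodable.encode v ∈ FP.gcodes d :=
                List.mem_filterMap.2 ⟨t, ht, by rw [hts]⟩
              simp [FP.gOk, hts, FP.testBit_mask.2 hcv]
            · simp [FP.gOk, hts]
          · simp [FreeGroup.reduce.sound hmk.symm]
        · intro m hm
          have hm' : m ∈ FP.gcodes d := FP.testBit_mask.1 hm
          obtain ⟨t, ht, hsome⟩ := List.mem_filterMap.1 hm'
          rcases hts : t.2.1 with v | j
          · rw [hts] at hsome
            obtain rfl : Encodable.encode v = m := by simpa using hsome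
            exact ⟨v, hd t ht v hts, rfl⟩
          · rw [hts] at hsome
            simp at hsome
      · rintro ⟨i, ⟨nd, hnd⟩, hsub⟩
        unfold FP.chk at hnd
        rcases hdec : (Encodable.decode (α := List (FP.Item k l)) nd) with _ | d
        · rw [hdec] at hnd; simp at hnd
        rw [hdec, Nat.unpair_pair] at hnd
        rcases hdu : (Encodable.decode (α := List ((Fin k ⊕ Fin l) × Bool)) n) with _ | u
        · rw [hdu] at hnd; simp at hnd
        rw [hdu] at hnd
        simp only [Bool.and_eq_true, decide_eq_true_eq, List.all_eq_true] at hnd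
        obtain ⟨⟨henc, hall⟩, hred⟩ := hnd
        have hdprop : ∀ t ∈ d, ∀ v, t.2.1 = Sum.inl v → v ∈ wordProblem g := by
          intro t ht v htv
          have hok := hall t ht
          rw [FP.gOk, htv] at hok
          obtain ⟨w, hw, hwv⟩ := hsub hok
          cases Encodable.encode_injective hwv
          exact hw
        have hmem := FP.mk_dWord_mem g R Lst hL1 d hdprop
        have hmkeq : FreeGroup.mk u = FreeGroup.mk (FP.dWord k l Lst d) :=
          FreeGroup.reduce.exact hred
        rw [← hmkeq] at hmem
        exact ⟨u, hmem, henc⟩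
  · -- the word problem of `G` is enumeration reducible to that of the extension
    refine ⟨{x | FP.chk2 k l x = true}, ?_, ?_⟩
    · exact ComputablePred.to_re
        (ComputablePred.computable_iff.2 ⟨FP.chk2 k l, (FP.primrec_chk2 k l).to_comp, rfl⟩)
    · intro n
      constructor
      · rintro ⟨v, hv, rfl⟩
        refine ⟨2 ^ Encodable.encode (FP.mapWd k l v), ?_, ?_⟩
        · show FP.chk2 k l _ = true
          simp [FP.chk2, Nat.unpair_pair, Encodable.encodek]
        · intro m hm
          have hm' : Nat.testBit (2 ^ Encodable.encode (FP.mapWd k l v)) m = true := hm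
          rw [Nat.testBit_two_pow, decide_eq_true_eq] at hm'
          cases hm'
          refine ⟨FP.mapWd k l v, ?_, rfl⟩
          have h2 := (hcopy (FreeGroup.mk v)).1 hv
          have h3 : FreeGroup.map Sum.inl (FreeGroup.mk v) ∈
              Subgroup.normalClosure (extRels g R) := (QuotientGroup.eq_one_iff _).1 h2
          rw [FreeGroup.map.mk] at h3
          exact h3
      · rintro ⟨i, hW, hsub⟩
        have hW' : FP.chk2 k l (Nat.pair n i) = true := hW
        unfold FP.chk2 at hW'
        rw [Nat.unpair_pair] at hW'
        rcases hdv : (Encodable.decode (α := List (Fin k × Bool)) n) with _ | v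
        · rw [hdv] at hW'; simp at hW'
        rw [hdv] at hW'
        simp only [Bool.and_eq_true, decide_eq_true_eq] at hW'
        obtain ⟨henc, hi⟩ := hW'
        have hmem : Encodable.encode (FP.mapWd k l v) ∈ Dfin i := by
          show Nat.testBit i _ = true
          rw [hi, Nat.testBit_two_pow]
          simp
        obtain ⟨w, hw, hwc⟩ := hsub hmem
        cases Encodable.encode_injective hwc
        have h3 : FreeGroup.map Sum.inl (FreeGroup.mk v) ∈
            Subgroup.normalClosure (extRels g R) := by
          rw [FreeGroup.map.mk]
          exact hw
        have h2 : PresentedGroup.mk (extRels g R) (FreeGroup.map Sum.inl (FreeGroup.mk v)) = 1 :=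
          (QuotientGroup.eq_one_iff _).2 h3
        exact ⟨v, (hcopy (FreeGroup.mk v)).2 h2, henc⟩


end Paper
end
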